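/- Let α ∈ (0,1) and let l ∈ ℕ. Then there exist a real constant c and a function g that is infinitely differentiable on [0,∞) such that, for all y > 0, ∫_{10}^{∞} e^{−yτ} τ^{−α−l} dτ = c · y^{l+α−1} + g(y). -/

import Mathlib

/-!
For `l = 0` write `∫_{10}^∞ = ∫_0^∞ - ∫_0^{10}`. The first integral is `Γ(1-α) y^{α-1}` by
scaling; the second is smooth in `y` because `τ^{-α}` is integrable on `(0,10]` and each
differentiation under the integral sign only brings down a bounded factor `-τ`. Integration by
parts gives `q ∫_{10}^∞ e^{-yτ} τ^{q-1} = y ∫_{10}^∞ e^{-yτ} τ^q - e^{-10y} 10^q`, which carries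
the decomposition from the exponent `q = -α-l` to `q-1` as long as `q ≠ 0`.
-/

open MeasureTheory Set Real Filter Topology

noncomputable def laplaceMoment (μ : Measure ℝ) (w : ℝ → ℝ) (m : ℕ) (y : ℝ) : ℝ :=
  ∫ τ, (-τ) ^ m * exp (-(y * τ)) * w τ ∂μ

section LaplaceMoment

variable {μ : Measure ℝ} {w : ℝ → ℝ} {R : ℝ}

lemma norm_pow_mul_exp_mul_le {τ y Y : ℝ} (hτ : |τ| ≤ R) (hy : |y| ≤ Y) (m : ℕ) (v : ℝ) :
    ‖(-τ) ^ m * exp (-(y * τ)) * v‖ ≤ R ^ m * exp (Y * R) * ‖v‖ := by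
  have hpow : |τ| ^ m ≤ R ^ m := pow_le_pow_left₀ (abs_nonneg τ) hτ m
  have hexp : exp (-(y * τ)) ≤ exp (Y * R) := by
    gcongr
    calc -(y * τ) ≤ |y| * |τ| := by rw [← abs_mul]; exact neg_le_abs _
      _ ≤ Y * R := mul_le_mul hy hτ (abs_nonneg τ) ((abs_nonneg y).trans hy)
  rw [norm_mul, norm_mul, norm_pow, norm_neg, norm_eq_abs, norm_eq_abs, abs_exp]
  gcongr
  exact pow_nonneg ((abs_nonneg τ).trans hτ) m

lemma integrable_pow_mul_exp_mul (hw : Integrable w μ) (hR : ∀ᵐ τ ∂μ, |τ| ≤ R) (m : ℕ) (y : ℝ) :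
    Integrable (fun τ ↦ (-τ) ^ m * exp (-(y * τ)) * w τ) μ := by
  refine (hw.norm.const_mul (R ^ m * exp (|y| * R))).mono' ?_ ?_
  · exact (Continuous.aestronglyMeasurable (by fun_prop)).mul hw.aestronglyMeasurable
  · filter_upwards [hR] with τ hτ using norm_pow_mul_exp_mul_le hτ le_rfl m (w τ)

lemma hasDerivAt_laplaceMoment (hw : Integrable w μ) (hR : ∀ᵐ τ ∂μ, |τ| ≤ R) (m : ℕ) (y₀ : ℝ) :
    HasDerivAt (laplaceMoment μ w m) (laplaceMoment μ w (m + 1) y₀) y₀ := by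
  refine (hasDerivAt_integral_of_dominated_loc_of_deriv_le
    (F := fun y τ ↦ (-τ) ^ m * exp (-(y * τ)) * w τ)
    (F' := fun y τ ↦ (-τ) ^ (m + 1) * exp (-(y * τ)) * w τ)
    (bound := fun τ ↦ R ^ (m + 1) * exp ((|y₀| + 1) * R) * ‖w τ‖)
    (Metric.ball_mem_nhds y₀ one_pos)
    (Eventually.of_forall fun y ↦ (integrable_pow_mul_exp_mul hw hR m y).aestronglyMeasurable)
    (integrable_pow_mul_exp_mul hw hR m y₀)
    (integrable_pow_mul_exp_mul hw hR (m + 1) y₀).aestronglyMeasurable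
    ?_ (hw.norm.const_mul _) ?_).2
  · filter_upwards [hR] with τ hτ y hy
    have hy' : |y| ≤ |y₀| + 1 := by
      have := abs_sub_abs_le_abs_sub y y₀
      rw [Metric.mem_ball, dist_eq] at hy
      linarith
    exact norm_pow_mul_exp_mul_le hτ hy' (m + 1) (w τ)
  · refine Eventually.of_forall fun τ y _ ↦ ?_
    have h : HasDerivAt (fun y ↦ -(y * τ)) (-τ) y := (hasDerivAt_mul_const τ).neg
    exact ((h.exp.const_mul ((-τ) ^ m)).mul_const (w τ)).congr_deriv (by ring)

lemma iteratedDeriv_laplaceMoment (hw : Integrable w μ) (hR : ∀ᵐ τ ∂μ, |τ| ≤ R) (m k : ℕ) :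
    iteratedDeriv k (laplaceMoment μ w m) = laplaceMoment μ w (m + k) := by
  induction k with
  | zero => rfl
  | succ k ih =>
    rw [iteratedDeriv_succ, ih]
    exact funext fun y ↦ (hasDerivAt_laplaceMoment hw hR (m + k) y).deriv

lemma contDiff_laplaceMoment (hw : Integrable w μ) (hR : ∀ᵐ τ ∂μ, |τ| ≤ R) (m : ℕ) :
    ContDiff ℝ (⊤ : ℕ∞) (laplaceMoment μ w m) :=
  contDiff_of_differentiable_iteratedDeriv fun k _ ↦ by
    rw [iteratedDeriv_laplaceMoment hw hR]
    exact fun y ↦ (hasDerivAt_laplaceMoment hw hR _ y).differentiableAt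

end LaplaceMoment

section TailIntegral

variable {a y : ℝ}

lemma integrableOn_exp_neg_mul_mul_rpow_Ioi (ha : 0 < a) (hy : 0 < y) (p : ℝ) :
    IntegrableOn (fun τ ↦ exp (-(y * τ)) * τ ^ p) (Ioi a) := by
  refine integrable_of_isBigO_exp_neg (half_pos hy) ?_ ?_
  · exact (by fun_prop : Continuous fun τ ↦ exp (-(y * τ))).continuousOn.mul
      (continuousOn_id.rpow_const fun τ hτ ↦ Or.inl (ha.trans_le hτ).ne')
  · have h := (tendsto_rpow_mul_exp_neg_mul_atTop_nhds_zero p (y / 2) (half_pos hy)).isBigO_one ℝ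
    refine (h.mul (Asymptotics.isBigO_refl (fun τ ↦ exp (-(y / 2) * τ)) atTop)).congr' ?_ ?_
    · refine Eventually.of_forall fun τ ↦ ?_
      change τ ^ p * exp _ * exp _ = exp _ * τ ^ p
      rw [mul_assoc, ← exp_add, mul_comm]
      ring_nf
    · exact Eventually.of_forall fun τ ↦ one_mul _

lemma integral_exp_neg_mul_mul_rpow_sub_one_Ioi (ha : 0 < a) (hy : 0 < y) (q : ℝ) :
    q * ∫ τ in Ioi a, exp (-(y * τ)) * τ ^ (q - 1)
      = y * (∫ τ in Ioi a, exp (-(y * τ)) * τ ^ q) - exp (-(y * a)) * a ^ q := by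
  have hderiv : ∀ τ ∈ Ici a, HasDerivAt (fun τ ↦ exp (-(y * τ)) * τ ^ q)
      (q * (exp (-(y * τ)) * τ ^ (q - 1)) - y * (exp (-(y * τ)) * τ ^ q)) τ := by
    intro τ hτ
    have h : HasDerivAt (fun τ ↦ -(y * τ)) (-y) τ :=
      ((hasDerivAt_id τ).const_mul y).neg.congr_deriv (by ring)
    exact (h.exp.mul (hasDerivAt_rpow_const (Or.inl (ha.trans_le hτ).ne'))).congr_deriv (by ring)
  have hint := integrableOn_exp_neg_mul_mul_rpow_Ioi ha hy
  have htends : Tendsto (fun τ ↦ exp (-(y * τ)) * τ ^ q) atTop (𝓝 0) :=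
    (tendsto_rpow_mul_exp_neg_mul_atTop_nhds_zero q y hy).congr fun τ ↦ by rw [mul_comm, neg_mul]
  have h := integral_Ioi_of_hasDerivAt_of_tendsto' hderiv
    (((hint (q - 1)).const_mul q).sub ((hint q).const_mul y)) htends
  rw [integral_sub ((hint (q - 1)).const_mul q) ((hint q).const_mul y), integral_const_mul,
    integral_const_mul] at h
  linarith

lemma integrableOn_rpow_neg_Ioc {α : ℝ} (hα : α < 1) :
    IntegrableOn (fun τ ↦ τ ^ (-α)) (Ioc 0 a) :=
  (intervalIntegral.intervalIntegrable_rpow' (by linarith)).1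

lemma ae_restrict_Ioc_abs_le (ha : 0 < a) : ∀ᵐ τ ∂(volume.restrict (Ioc 0 a)), |τ| ≤ a :=
  ae_restrict_of_forall_mem measurableSet_Ioc fun _ hτ ↦ abs_le.2 ⟨by linarith [hτ.1], hτ.2⟩

lemma integral_exp_neg_mul_mul_rpow_neg_Ioi {α : ℝ} (hα : α < 1) (ha : 0 < a) (hy : 0 < y) :
    ∫ τ in Ioi a, exp (-(y * τ)) * τ ^ (-α)
      = Gamma (1 - α) * y ^ (α - 1)
        - laplaceMoment (volume.restrict (Ioc 0 a)) (fun τ ↦ τ ^ (-α)) 0 y := by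
  have hΓ : ∫ τ in Ioi 0, exp (-(y * τ)) * τ ^ (-α) = Gamma (1 - α) * y ^ (α - 1) := by
    have h := integral_rpow_mul_exp_neg_mul_Ioi (sub_pos.2 hα) hy
    simp_rw [sub_sub_cancel_left, mul_comm (_ ^ _)] at h
    rw [h, one_div, inv_rpow hy.le, ← rpow_neg hy.le, neg_sub, mul_comm]
  have hIoc : IntegrableOn (fun τ ↦ exp (-(y * τ)) * τ ^ (-α)) (Ioc 0 a) := by
    simpa [IntegrableOn] using
      integrable_pow_mul_exp_mul (integrableOn_rpow_neg_Ioc hα) (ae_restrict_Ioc_abs_le ha) 0 y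
  rw [← hΓ, ← Ioc_union_Ioi_eq_Ioi ha.le, setIntegral_union Ioc_disjoint_Ioi_same measurableSet_Ioi
    hIoc (integrableOn_exp_neg_mul_mul_rpow_Ioi ha hy _)]
  simp [laplaceMoment]

end TailIntegral

/-- For `α ∈ (0,1)` and `l ∈ ℕ`, there are a constant `c` and a function `g`,
infinitely differentiable on `[0,∞)`, such that for all `y > 0`,
`∫_{10}^∞ e^{-yτ} τ^{-α-l} dτ = c y^{l+α-1} + g(y)`. -/
theorem stmt_11 (α : ℝ) (l : ℕ) (hα0 : 0 < α) (hα1 : α < 1) :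
    ∃ (c : ℝ) (g : ℝ → ℝ),
      ContDiffOn ℝ (⊤ : ℕ∞) g (Set.Ici 0) ∧
      ∀ y : ℝ, 0 < y →
        (∫ τ in Set.Ioi (10 : ℝ), Real.exp (-(y * τ)) * τ ^ (-α - (l : ℝ)))
          = c * y ^ ((l : ℝ) + α - 1) + g y := by
  induction l with
  | zero =>
    refine ⟨Gamma (1 - α),
      fun y ↦ -laplaceMoment (volume.restrict (Ioc 0 10)) (fun τ ↦ τ ^ (-α)) 0 y,
      (contDiff_laplaceMoment (integrableOn_rpow_neg_Ioc hα1)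
        (ae_restrict_Ioc_abs_le (by norm_num)) 0).neg.contDiffOn, fun y hy ↦ ?_⟩
    simpa [sub_eq_add_neg] using integral_exp_neg_mul_mul_rpow_neg_Ioi hα1 (by norm_num) hy
  | succ l ih =>
    obtain ⟨c, g, hg, hcg⟩ := ih
    set q : ℝ := -α - l
    have hq : q ≠ 0 := by have := l.cast_nonneg (α := ℝ); linarith
    refine ⟨c / q, fun y ↦ (y * g y - exp (-(y * 10)) * 10 ^ q) / q, ?_, fun y hy ↦ ?_⟩
    · have hbdry : ContDiff ℝ (⊤ : ℕ∞) fun y : ℝ ↦ exp (-(y * 10)) * (10 : ℝ) ^ q := by fun_prop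
      exact ((contDiffOn_id.mul hg).sub hbdry.contDiffOn).div_const q
    · have hrec := integral_exp_neg_mul_mul_rpow_sub_one_Ioi (a := 10) (by norm_num) hy q
      rw [hcg y hy] at hrec
      rw [show -α - ((l + 1 : ℕ) : ℝ) = q - 1 by push_cast; ring,
        show ((l + 1 : ℕ) : ℝ) + α - 1 = (l + α - 1) + 1 by push_cast; ring, rpow_add_one hy.ne']
      field_simp
      linear_combination hrec
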